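/- Let A in R^{(D+1)×(D+1)} be symmetric and J_D-diagonalizable, i.e., A J_D V = V J_D Λ for some invertible V and diagonal Λ whose diagonal entries have pairwise distinct absolute values. Then the columns of V are pairwise Lorentz-orthogonal: [v_i, v_j] = 0 for i ≠ j. -/

import Mathlib

/-!
The Gram matrix `G = Vᵀ J V` of the columns of `V` is symmetric, and the relation
`A J V = V (J Λ)` turns `G (J Λ)` into `Vᵀ (J A J) V`, which is symmetric as well. Hence `G`
commutes with the diagonal matrix `J Λ`, so `G i j = 0` whenever the `i`-th and `j`-th diagonal
entries of `J Λ` differ; they do for `i ≠ j`, since they are `±λ_i`, `±λ_j`.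
-/

open Matrix BigOperators

/-- The Lorentz signature matrix J_D = diag(-1, 1, …, 1) over ℝ. -/
noncomputable def JmatR (D : ℕ) : Matrix (Fin (D + 1)) (Fin (D + 1)) ℝ :=
  Matrix.diagonal (fun i => if i = 0 then (-1 : ℝ) else 1)

namespace Matrix

variable {n R : Type*} [Fintype n] [CommRing R]

theorem IsSymm.transpose_mul_mul {J : Matrix n n R} (hJ : J.IsSymm) (V : Matrix n n R) :
    (Vᵀ * J * V).IsSymm := by
  simp only [IsSymm, transpose_mul, transpose_transpose, hJ.eq, Matrix.mul_assoc]

theorem IsSymm.apply_eq_zero_of_isSymm_mul_diagonal [DecidableEq n] [NoZeroDivisors R]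
    {G : Matrix n n R} {μ : n → R} (hG : G.IsSymm) (hGμ : (G * diagonal μ).IsSymm) {i j : n}
    (hμ : μ i ≠ μ j) :
    G i j = 0 := by
  have hcomm : G i j * μ j = G i j * μ i := by
    simpa only [mul_diagonal, hG.apply i j] using hGμ.apply j i
  exact (mul_eq_mul_left_iff.mp hcomm).resolve_left hμ.symm

theorem transpose_mul_mul_apply_eq_zero_of_mul_eq_mul_diagonal [DecidableEq n]
    [NoZeroDivisors R] {A J V : Matrix n n R} {μ : n → R} (hA : A.IsSymm) (hJ : J.IsSymm)
    (h : A * J * V = V * diagonal μ) {i j : n} (hμ : μ i ≠ μ j) :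
    (Vᵀ * J * V) i j = 0 := by
  have hJAJ : (J * A * J).IsSymm := by simpa only [hJ.eq] using hA.transpose_mul_mul J
  have hGμ : Vᵀ * J * V * diagonal μ = Vᵀ * (J * A * J) * V := by
    simp only [Matrix.mul_assoc, ← h]
  exact (hJ.transpose_mul_mul V).apply_eq_zero_of_isSymm_mul_diagonal
    (hGμ ▸ hJAJ.transpose_mul_mul V) hμ

theorem transpose_mul_mul_apply (J V : Matrix n n R) (i j : n) :
    (Vᵀ * J * V) i j = (fun k => V k i) ⬝ᵥ (J *ᵥ fun k => V k j) := by
  rw [Matrix.mul_assoc]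
  rfl

end Matrix

theorem JmatR_isSymm (D : ℕ) : (JmatR D).IsSymm :=
  isSymm_diagonal _

theorem JmatR_mul_diagonal (D : ℕ) (lam : Fin (D + 1) → ℝ) :
    JmatR D * diagonal lam = diagonal (fun k => (if k = 0 then -1 else 1) * lam k) := by
  simp [JmatR, diagonal_mul_diagonal]

theorem abs_ite_neg_one_one_mul {α : Type*} [Ring α] [LinearOrder α] [IsOrderedRing α]
    (p : Prop) [Decidable p] (x : α) : |(if p then -1 else 1) * x| = |x| := by
  split_ifs <;> simp

theorem j_diagonalizable_columns_lorentz_orthogonal_general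
    (D : ℕ) (A V : Matrix (Fin (D + 1)) (Fin (D + 1)) ℝ)
    (lam : Fin (D + 1) → ℝ)
    (hA : Aᵀ = A)
    (hdiag : A * JmatR D * V = V * (JmatR D * Matrix.diagonal lam))
    (hdist : ∀ i j, i ≠ j → |lam i| ≠ |lam j|) :
    ∀ i j, i ≠ j →
      (fun k => V k i) ⬝ᵥ (JmatR D *ᵥ fun k => V k j) = 0 := by
  intro i j hij
  rw [JmatR_mul_diagonal] at hdiag
  rw [← transpose_mul_mul_apply]
  refine transpose_mul_mul_apply_eq_zero_of_mul_eq_mul_diagonal hA (JmatR_isSymm D) hdiag ?_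
  intro heq
  exact hdist i j hij (by simpa only [abs_ite_neg_one_one_mul] using congrArg abs heq)

/-- If A is symmetric and J_D-diagonalizable, A J_D V = V J_D Λ with V
invertible and Λ diagonal with pairwise distinct absolute values, then the columns of V
are pairwise Lorentz-orthogonal. -/
theorem j_diagonalizable_columns_lorentz_orthogonal
    (D : ℕ) (A V : Matrix (Fin (D + 1)) (Fin (D + 1)) ℝ)
    (lam : Fin (D + 1) → ℝ)
    (hA : Aᵀ = A) (hV : IsUnit V.det)
    (hdiag : A * JmatR D * V = V * (JmatR D * Matrix.diagonal lam))
    (hdist : ∀ i j, i ≠ j → |lam i| ≠ |lam j|) :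
    ∀ i j, i ≠ j →
      (fun k => V k i) ⬝ᵥ (JmatR D *ᵥ fun k => V k j) = 0 :=
  j_diagonalizable_columns_lorentz_orthogonal_general D A V lam hA hdiag hdist
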